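/- With the admissible triple data as above, the matrix function Σ(t) satisfies the Lyapunov-type identity A Σ(τ) − Σ(τ) A* = i Π(τ) j Π(τ)* for all τ ≥ 0, where j = diag(I_r, −I_r). -/

import Mathlib

/-!
Each column block of `Π` solves a linear ODE, and together they give `Π' = -i A Π j`. Since
`j = j* = j⁻¹`, this makes `d/dτ (i Π j Π*) = A Π Π* - Π Π* A*`, which is also the derivative of
`A Σ - Σ A*` because `Σ' = Π Π*`. Hence the Lyapunov defect `A Σ - Σ A* - i Π j Π*` is constant,
and at `τ = 0` it vanishes by the admissibility condition `B* - B = i Φ₂ Φ₂*`.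
-/

open Matrix

theorem Matrix.hasDerivAt_exp_smul {m : Type*} [Fintype m] [DecidableEq m] (A : Matrix m m ℂ)
    (c : ℂ) (t : ℝ) :
    HasDerivAt (fun s : ℝ => NormedSpace.exp ((c * s) • A))
      (c • A * NormedSpace.exp ((c * t) • A)) t := by
  have hsmul (s : ℝ) : (c * s) • A = s • c • A := by
    rw [← smul_assoc, Complex.real_smul, mul_comm]
  simp only [hsmul]
  -- `HasDerivAt` only sees the topology, so any normed-algebra structure inducing the product
  -- topology can be used; the `ℓ∞`-operator norm is submultiplicative, the entrywise one is not.
  let := Matrix.linftyOpNormedRing (n := m) (α := ℂ)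
  let := Matrix.linftyOpNormedAlgebra (n := m) (R := ℝ) (α := ℂ)
  exact hasDerivAt_exp_smul_const' (c • A) t

attribute [local instance] Matrix.normedAddCommGroup Matrix.normedSpace

section Calculus

variable {m n₁ n₂ : Type*}

theorem HasDerivAt.matrix_mul [Fintype m] [Fintype n₂]
    {f : ℝ → Matrix n₁ m ℂ} {g : ℝ → Matrix m n₂ ℂ} {f' : Matrix n₁ m ℂ} {g' : Matrix m n₂ ℂ}
    {t : ℝ} (hf : HasDerivAt f f' t) (hg : HasDerivAt g g' t) :
    HasDerivAt (fun s => f s * g s) (f' * g t + f t * g') t := by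
  refine hasDerivAt_pi.2 fun i => hasDerivAt_pi.2 fun j => ?_
  have hsum := HasDerivAt.fun_sum (u := Finset.univ) fun l _ =>
    (hasDerivAt_pi.1 (hasDerivAt_pi.1 hf i) l).mul (hasDerivAt_pi.1 (hasDerivAt_pi.1 hg l) j)
  simpa only [mul_apply, Matrix.add_apply, Finset.sum_add_distrib, Pi.mul_apply] using hsum

theorem HasDerivAt.matrix_conjTranspose [Fintype n₁] [Fintype n₂]
    {f : ℝ → Matrix n₁ n₂ ℂ} {f' : Matrix n₁ n₂ ℂ} {t : ℝ} (hf : HasDerivAt f f' t) :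
    HasDerivAt (fun s => (f s)ᴴ) f'ᴴ t :=
  hasDerivAt_pi.2 fun i => hasDerivAt_pi.2 fun j =>
    Complex.conjCLE.toContinuousLinearMap.hasFDerivAt.comp_hasDerivAt t
      (hasDerivAt_pi.1 (hasDerivAt_pi.1 hf j) i)

theorem HasDerivAt.matrix_fromCols [Fintype n₁] [Fintype n₂]
    {f : ℝ → Matrix m n₁ ℂ} {g : ℝ → Matrix m n₂ ℂ} {f' : Matrix m n₁ ℂ} {g' : Matrix m n₂ ℂ}
    {t : ℝ} (hf : HasDerivAt f f' t) (hg : HasDerivAt g g' t) :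
    HasDerivAt (fun s => fromCols (f s) (g s)) (fromCols f' g') t := by
  refine hasDerivAt_pi.2 fun i => hasDerivAt_pi.2 ?_
  rintro (j | j)
  · exact hasDerivAt_pi.1 (hasDerivAt_pi.1 hf i) j
  · exact hasDerivAt_pi.1 (hasDerivAt_pi.1 hg i) j

end Calculus

section Lyapunov

variable {m k : Type*} [Fintype m] [Fintype k] [DecidableEq k]
  {P : ℝ → Matrix m k ℂ} {A : Matrix m m ℂ} {J : Matrix k k ℂ}

theorem hasDerivAt_I_smul_mul_mul_conjTranspose (hJ : Jᴴ = J) (hJJ : J * J = 1) {t : ℝ}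
    (hP : HasDerivAt P (-Complex.I • (A * P t * J)) t) :
    HasDerivAt (fun s => Complex.I • (P s * J * (P s)ᴴ))
      (A * (P t * (P t)ᴴ) - P t * (P t)ᴴ * Aᴴ) t := by
  refine (((hP.matrix_mul (hasDerivAt_const t J)).matrix_mul hP.matrix_conjTranspose).const_smul
    Complex.I).congr_deriv ?_
  have hJJ' (X : Matrix k m ℂ) : J * (J * X) = X := by
    rw [← Matrix.mul_assoc, hJJ, Matrix.one_mul]
  simp only [neg_smul, conjTranspose_neg, conjTranspose_smul, conjTranspose_mul, hJ,
    Complex.star_def, Complex.conj_I, Matrix.neg_mul, Matrix.smul_mul, Matrix.mul_smul,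
    Matrix.mul_assoc, hJJ, hJJ', Matrix.mul_one, Matrix.mul_zero, add_zero, smul_add, smul_neg,
    smul_smul, Complex.I_mul_I, neg_neg, one_smul]
  rw [sub_eq_add_neg]

theorem lyapunov_of_hasDerivAt (hJ : Jᴴ = J) (hJJ : J * J = 1) {S : ℝ → Matrix m m ℂ}
    (hP : ∀ t, HasDerivAt P (-Complex.I • (A * P t * J)) t)
    (hS : ∀ t, HasDerivAt S (P t * (P t)ᴴ) t)
    (h₀ : A * S 0 - S 0 * Aᴴ = Complex.I • (P 0 * J * (P 0)ᴴ)) (τ : ℝ) :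
    A * S τ - S τ * Aᴴ = Complex.I • (P τ * J * (P τ)ᴴ) := by
  let D : ℝ → Matrix m m ℂ := fun t => A * S t - S t * Aᴴ - Complex.I • (P t * J * (P t)ᴴ)
  have hD (t : ℝ) : HasDerivAt D 0 t := by
    refine ((((hasDerivAt_const t A).matrix_mul (hS t)).sub
      ((hS t).matrix_mul (hasDerivAt_const t Aᴴ))).sub
      (hasDerivAt_I_smul_mul_mul_conjTranspose hJ hJJ (hP t))).congr_deriv ?_
    simp only [Matrix.zero_mul, Matrix.mul_zero, zero_add, add_zero, Matrix.mul_assoc, sub_self]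
  have hDτ := is_const_of_deriv_eq_zero (fun t => (hD t).differentiableAt)
    (fun t => (hD t).deriv) τ 0
  simpa only [D, h₀, sub_self, sub_eq_zero] using hDτ

end Lyapunov

section Colligation

variable {m k : Type*} [Fintype k]

theorem fromCols_mul_fromBlocks_one_neg_one_mul_conjTranspose [DecidableEq k]
    (X Y : Matrix m k ℂ) :
    fromCols X Y * (fromBlocks 1 0 0 (-1) : Matrix (k ⊕ k) (k ⊕ k) ℂ) * (fromCols X Y)ᴴ =
      X * Xᴴ - Y * Yᴴ := by
  rw [fromCols_mul_fromBlocks, conjTranspose_fromCols_eq_fromRows_conjTranspose,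
    fromCols_mul_fromRows]
  simp only [Matrix.mul_one, Matrix.mul_zero, add_zero, zero_add, Matrix.mul_neg, Matrix.neg_mul]
  rw [sub_eq_add_neg]

theorem hasDerivAt_fromCols_exp_mul [Fintype m] [DecidableEq m] [DecidableEq k]
    (A : Matrix m m ℂ) (Φ₁ Φ : Matrix m k ℂ) (t : ℝ) :
    HasDerivAt
      (fun s : ℝ => fromCols (NormedSpace.exp ((-(Complex.I * s)) • A) * Φ₁)
        (-(NormedSpace.exp ((Complex.I * s) • A) * Φ)))
      (-Complex.I • (A * fromCols (NormedSpace.exp ((-(Complex.I * t)) • A) * Φ₁)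
        (-(NormedSpace.exp ((Complex.I * t) • A) * Φ)) *
        (fromBlocks 1 0 0 (-1) : Matrix (k ⊕ k) (k ⊕ k) ℂ))) t := by
  have hX := (hasDerivAt_exp_smul A (-Complex.I) t).matrix_mul (hasDerivAt_const t Φ₁)
  have hY := ((hasDerivAt_exp_smul A Complex.I t).matrix_mul (hasDerivAt_const t Φ)).neg
  simp only [neg_mul, Matrix.mul_zero, add_zero] at hX hY
  refine (hX.matrix_fromCols hY).congr_deriv ?_
  rw [mul_fromCols, fromCols_mul_fromBlocks]
  ext i (j | j) <;> simp [Matrix.smul_mul, Matrix.mul_assoc]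

theorem sub_conjTranspose_of_conjTranspose_sub {B : Matrix m m ℂ} {Φ₁ Φ₂ : Matrix m k ℂ}
    (hB : Bᴴ - B = Complex.I • (Φ₂ * Φ₂ᴴ)) :
    (B - Φ₁ * Φ₂ᴴ) - (B - Φ₁ * Φ₂ᴴ)ᴴ =
      Complex.I • (Φ₁ * Φ₁ᴴ - (Φ₁ + Complex.I • Φ₂) * (Φ₁ + Complex.I • Φ₂)ᴴ) := by
  have hBh : Bᴴ = B + Complex.I • (Φ₂ * Φ₂ᴴ) := by rw [← hB, add_sub_cancel]
  simp only [conjTranspose_sub, conjTranspose_mul, conjTranspose_conjTranspose, hBh,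
    conjTranspose_add, conjTranspose_smul, Complex.star_def, Complex.conj_I, Matrix.add_mul,
    Matrix.mul_add, Matrix.smul_mul, Matrix.mul_smul, smul_add, smul_sub, smul_smul, mul_neg,
    Complex.I_mul_I]
  match_scalars <;> ring_nf
  simp only [Complex.I_pow_three]

end Colligation

theorem stmt_18_general {n r : ℕ}
    (B : Matrix (Fin n) (Fin n) ℂ) (Φ₁ Φ₂ : Matrix (Fin n) (Fin r) ℂ)
    (hadm : Bᴴ - B = Complex.I • (Φ₂ * Φ₂ᴴ))
    (A : Matrix (Fin n) (Fin n) ℂ) (hA : A = B - Φ₁ * Φ₂ᴴ)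
    (Φ : Matrix (Fin n) (Fin r) ℂ) (hΦ : Φ = Φ₁ + Complex.I • Φ₂)
    (Pim : ℝ → Matrix (Fin n) (Fin r ⊕ Fin r) ℂ)
    (hPim : ∀ t : ℝ, Pim t = Matrix.fromCols
      (NormedSpace.exp ((-(Complex.I * t)) • A) * Φ₁)
      (-(NormedSpace.exp ((Complex.I * t) • A) * Φ)))
    (Sig : ℝ → Matrix (Fin n) (Fin n) ℂ)
    (hSig : ∀ t : ℝ, Sig t = 1 + ∫ s in (0:ℝ)..t, Pim s * (Pim s)ᴴ)
    (jm : Matrix (Fin r ⊕ Fin r) (Fin r ⊕ Fin r) ℂ)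
    (hj : jm = Matrix.fromBlocks (1 : Matrix (Fin r) (Fin r) ℂ) 0 0 (-1)) :
    ∀ τ : ℝ, 0 ≤ τ →
      A * Sig τ - Sig τ * Aᴴ = Complex.I • (Pim τ * jm * (Pim τ)ᴴ) := by
  intro τ _
  subst hj
  have hPim_deriv (t : ℝ) :
      HasDerivAt Pim (-Complex.I • (A * Pim t * fromBlocks 1 0 0 (-1))) t := by
    rw [funext hPim]
    exact hasDerivAt_fromCols_exp_mul A Φ₁ Φ t
  have hPim_cont : Continuous Pim :=
    continuous_iff_continuousAt.2 fun t => (hPim_deriv t).continuousAt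
  have hSig_deriv (t : ℝ) : HasDerivAt Sig (Pim t * (Pim t)ᴴ) t := by
    rw [funext hSig]
    exact ((hPim_cont.matrix_mul hPim_cont.matrix_conjTranspose).integral_hasStrictDerivAt 0
      t).hasDerivAt.const_add 1
  refine lyapunov_of_hasDerivAt (by simp [fromBlocks_conjTranspose])
    (by simp [fromBlocks_multiply]) hPim_deriv hSig_deriv ?_ τ
  rw [hSig 0, hPim 0, intervalIntegral.integral_same, add_zero, Matrix.mul_one, Matrix.one_mul,
    fromCols_mul_fromBlocks_one_neg_one_mul_conjTranspose]
  simp only [Complex.ofReal_zero, mul_zero, neg_zero, zero_smul, NormedSpace.exp_zero,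
    Matrix.one_mul, Matrix.neg_mul, conjTranspose_neg, Matrix.mul_neg, neg_neg]
  subst hA hΦ
  exact sub_conjTranspose_of_conjTranspose_sub hadm

theorem stmt_18 {n r : ℕ} (hn : 0 < n) (hr : 0 < r)
    (B : Matrix (Fin n) (Fin n) ℂ) (Φ₁ Φ₂ : Matrix (Fin n) (Fin r) ℂ)
    (hadm : Bᴴ - B = Complex.I • (Φ₂ * Φ₂ᴴ))
    (A : Matrix (Fin n) (Fin n) ℂ) (hA : A = B - Φ₁ * Φ₂ᴴ)
    (Φ : Matrix (Fin n) (Fin r) ℂ) (hΦ : Φ = Φ₁ + Complex.I • Φ₂)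
    (Pim : ℝ → Matrix (Fin n) (Fin r ⊕ Fin r) ℂ)
    (hPim : ∀ t : ℝ, Pim t = Matrix.fromCols
      (NormedSpace.exp ((-(Complex.I * t)) • A) * Φ₁)
      (-(NormedSpace.exp ((Complex.I * t) • A) * Φ)))
    (Sig : ℝ → Matrix (Fin n) (Fin n) ℂ)
    (hSig : ∀ t : ℝ, Sig t = 1 + ∫ s in (0:ℝ)..t, Pim s * (Pim s)ᴴ)
    (jm : Matrix (Fin r ⊕ Fin r) (Fin r ⊕ Fin r) ℂ)
    (hj : jm = Matrix.fromBlocks (1 : Matrix (Fin r) (Fin r) ℂ) 0 0 (-1)) :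
    ∀ τ : ℝ, 0 ≤ τ →
      A * Sig τ - Sig τ * Aᴴ = Complex.I • (Pim τ * jm * (Pim τ)ᴴ) :=
  stmt_18_general B Φ₁ Φ₂ hadm A hA Φ hΦ Pim hPim Sig hSig jm hj
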